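/- Let N ≥ 1, Θ = (θ_1,…,θ_N) ∈ (0,∞)^N, and let X = (X_t)_{t∈ℤ^N} be a random field satisfying: (a) there exists G ∈ 𝒢_Θ with X_t = ⟨Θ̂, X̂⁻_t⟩ + Δ_t G for every t; and (b) for every j ∈ {1,…,N} and all fixed t_1,…,t_{j−1},t_{j+1},…,t_N ∈ ℤ, e^{m θ_j} X_{t_1,…,t_{j−1},m,t_{j+1},…,t_N} → 0 in probability as m → −∞. Then for every t ∈ ℤ^N the random variable X_t admits the moving-average representation X_t = e^{−Σ_{l=1}^N t_l θ_l} · lim_{M_1→∞}⋯lim_{M_N→∞} Σ_{j_1=−M_1}^{t_1}⋯Σ_{j_N=−M_N}^{t_N} e^{Σ_{l=1}^N j_l θ_l} Δ_{(j_1,…,j_N)} G, where the iterated limit is taken in probability. -/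

import Mathlib

open MeasureTheory Filter

noncomputable section

/-- Two families of real random variables indexed by `ℤ^N` have the same
finite-dimensional distributions. -/
def HasSameFDD {Ω : Type*} [MeasurableSpace Ω] {N : ℕ} (μ : Measure Ω)
    (X Y : (Fin N → ℤ) → Ω → ℝ) : Prop :=
  ∀ (n : ℕ) (t : Fin n → (Fin N → ℤ)),
    μ.map (fun ω i => X (t i) ω) = μ.map (fun ω i => Y (t i) ω)

/-- A random field on `ℤ^N` is stationary if every shift leaves the
finite-dimensional distributions unchanged. -/
def IsStationaryRF {Ω : Type*} [MeasurableSpace Ω] {N : ℕ} (μ : Measure Ω)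
    (X : (Fin N → ℤ) → Ω → ℝ) : Prop :=
  ∀ s : Fin N → ℤ, HasSameFDD μ (fun t => X (t + s)) X

/-- A random field `Y` on `ℤ^N` is `Θ`-self-similar if `(Y_{t+s})_t` equals
`(e^{⟨s,Θ⟩} Y_t)_t` in finite-dimensional distributions for every `s`. -/
def IsSelfSimilar {Ω : Type*} [MeasurableSpace Ω] {N : ℕ} (μ : Measure Ω)
    (Θ : Fin N → ℝ) (Y : (Fin N → ℤ) → Ω → ℝ) : Prop :=
  ∀ s : Fin N → ℤ, HasSameFDD μ (fun t => Y (t + s))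
    (fun t ω => Real.exp (∑ l, (s l : ℝ) * Θ l) * Y t ω)

/-- The square increment `Δ_t X = Σ_{i ∈ {0,1}^N} (−1)^{Σ_l i_l} X_{t−i}`. -/
def sqInc {N : ℕ} (X : (Fin N → ℤ) → ℝ) (t : Fin N → ℤ) : ℝ :=
  ∑ i : Fin N → Bool,
    (-1 : ℝ) ^ ((∑ l, if i l then 1 else 0 : ℕ)) *
      X (fun l => t l - if i l then 1 else 0)

/-- A field has stationary (rectangular) increments if its square-increment
field is stationary. -/
def HasStationaryIncrements {Ω : Type*} [MeasurableSpace Ω] {N : ℕ} (μ : Measure Ω)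
    (G : (Fin N → ℤ) → Ω → ℝ) : Prop :=
  IsStationaryRF μ (fun t ω => sqInc (fun u => G u ω) t)

/-- The inner product `⟨Θ̂, X̂⁻_t⟩ = Σ_{i ∈ {0,1}^N, i ≠ 0} (−1)^{1+Σ_l i_l}
e^{−⟨i,Θ⟩} X_{t−i}`. -/
def prevInner {N : ℕ} (Θ : Fin N → ℝ) (X : (Fin N → ℤ) → ℝ) (t : Fin N → ℤ) : ℝ :=
  ∑ i ∈ Finset.univ.filter (fun i : Fin N → Bool => i ≠ fun _ => false),
    (-1 : ℝ) ^ ((1 + ∑ l, if i l then 1 else 0 : ℕ)) *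
      (Real.exp (-∑ l, (if i l then (1 : ℝ) else 0) * Θ l) *
        X (fun l => t l - if i l then 1 else 0))

/-- Iterated limit in probability `lim_{M₁→∞} ⋯ lim_{M_k→∞} F(M₁,…,M_k) = Z`:
the innermost limit is over the last variable, the outermost over the first. -/
def IterLimInProb {Ω : Type*} [MeasurableSpace Ω] (μ : Measure Ω) :
    (k : ℕ) → ((Fin k → ℕ) → Ω → ℝ) → (Ω → ℝ) → Prop
  | 0, F, Z => ∀ ω, F (fun i => i.elim0) ω = Z ω
  | k + 1, F, Z => ∃ H : ℕ → Ω → ℝ,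
      (∀ M₁ : ℕ, IterLimInProb μ k (fun M => F (Fin.cons M₁ M)) (H M₁)) ∧
      TendstoInMeasure μ H atTop Z

/-- The class `𝒢_Θ`: stationary increment fields `G` vanishing on
`Σ_l t_l ∈ {0,−1,…,−N+1}` such that the iterated limit (in probability)
`lim_{M₁→∞}⋯lim_{M_N→∞} Σ_{j₁=−M₁}^{t₁}⋯Σ_{j_N=−M_N}^{t_N} e^{⟨j,Θ⟩} Δ_j G`
exists as an (almost surely finite, real-valued) random variable for every `t`. -/
def MemClassG {Ω : Type*} [MeasurableSpace Ω] {N : ℕ} (μ : Measure Ω)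
    (Θ : Fin N → ℝ) (G : (Fin N → ℤ) → Ω → ℝ) : Prop :=
  HasStationaryIncrements μ G ∧
  (∀ t : Fin N → ℤ, -(N : ℤ) + 1 ≤ ∑ l, t l → (∑ l, t l) ≤ 0 → ∀ ω, G t ω = 0) ∧
  (∀ t : Fin N → ℤ, ∃ Z : Ω → ℝ,
    IterLimInProb μ N (fun M ω =>
      ∑ j ∈ Finset.Icc (fun l => -(M l : ℤ)) t,
        Real.exp (∑ l, (j l : ℝ) * Θ l) * sqInc (fun u => G u ω) j) Z)

/-- The iterated (chained) sum
`Σ_{k₁ = c − t₂ − … − t_N}^{t₁} Σ_{k₂ = c − k₁ − t₃ − … − t_N}^{t₂} ⋯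
 Σ_{k_N = c − k₁ − … − k_{N−1}}^{t_N} f(k)`, with empty ranges contributing `0`. -/
def iterSumPos : (n : ℕ) → ℤ → (Fin n → ℤ) → ((Fin n → ℤ) → ℝ) → ℝ
  | 0, _, _, f => f (fun i => i.elim0)
  | n + 1, c, t, f =>
      ∑ k ∈ Finset.Icc (c - ∑ l : Fin n, t l.succ) (t 0),
        iterSumPos n (c - k) (fun l => t l.succ) (fun j => f (Fin.cons k j))

/-- The iterated (chained) sum
`Σ_{k₁ = t₁+1}^{c − t₂ − … − t_N − N + 1} Σ_{k₂ = t₂+1}^{c − k₁ − t₃ − … − t_N − N + 2} ⋯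
 Σ_{k_N = t_N+1}^{c − k₁ − … − k_{N−1}} f(k)`, with empty ranges contributing `0`. -/
def iterSumNeg : (n : ℕ) → ℤ → (Fin n → ℤ) → ((Fin n → ℤ) → ℝ) → ℝ
  | 0, _, _, f => f (fun i => i.elim0)
  | n + 1, c, t, f =>
      ∑ k ∈ Finset.Icc (t 0 + 1) (c - (∑ l : Fin n, t l.succ) - (n : ℤ)),
        iterSumNeg n (c - k) (fun l => t l.succ) (fun j => f (Fin.cons k j))

/-- The field `G` built from a (deterministic realisation of a) field `Y`:
for `Σ_l t_l ≥ 1` it is the chained sum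
`Σ_{k₁ = 1−t₂−…−t_N}^{t₁} ⋯ Σ_{k_N = 1−k₁−…−k_{N−1}}^{t_N} e^{−⟨k,Θ⟩} Δ_k Y`,
and for `Σ_l t_l ≤ 0` it is
`(−1)^N Σ_{k₁ = t₁+1}^{−t₂−…−t_N−N+1} ⋯ Σ_{k_N = t_N+1}^{−k₁−…−k_{N−1}} e^{−⟨k,Θ⟩} Δ_k Y`. -/
def lampertiG {N : ℕ} (Θ : Fin N → ℝ) (Y : (Fin N → ℤ) → ℝ) (t : Fin N → ℤ) : ℝ :=
  if 1 ≤ ∑ l, t l then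
    iterSumPos N 1 t (fun k => Real.exp (-∑ l, (k l : ℝ) * Θ l) * sqInc Y k)
  else
    (-1 : ℝ) ^ N *
      iterSumNeg N 0 t (fun k => Real.exp (-∑ l, (k l : ℝ) * Θ l) * sqInc Y k)

/-!
The weighted field `Y_t = e^{⟨t,Θ⟩} X_t` satisfies `Δ_t Y = e^{⟨t,Θ⟩} Δ_t G`: this is the
recursion (a) multiplied by `e^{⟨t,Θ⟩}`. Hence the partial sum over the box `[-M, t]`
telescopes to the alternating sum of `Y` over the `2^N` corners of the box `[-M-1, t]`. The
corner `t` contributes `e^{⟨t,Θ⟩} X_t`. Every other corner has some coordinate equal to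
`-M_l - 1`; if `l` is the last such coordinate, the corner does not depend on the later `M`'s,
and hypothesis (b) makes it vanish in the limit `M_l → ∞`.
-/

namespace MeasureTheory

variable {Ω ι : Type*} [MeasurableSpace Ω] {μ : Measure Ω} {l : Filter ι}

theorem tendstoInMeasure_const {E : Type*} [PseudoEMetricSpace E] (g : Ω → E) :
    TendstoInMeasure μ (fun _ : ι => g) l g := by
  intro ε hε
  simpa [not_le.mpr hε] using tendsto_const_nhds

theorem TendstoInMeasure.add {E : Type*} [SeminormedAddCommGroup E] {f f' : ι → Ω → E}
    {g g' : Ω → E} (hf : TendstoInMeasure μ f l g) (hf' : TendstoInMeasure μ f' l g') :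
    TendstoInMeasure μ (fun i ω => f i ω + f' i ω) l (fun ω => g ω + g' ω) := by
  intro ε hε
  have hε2 : 0 < ε / 2 := ENNReal.half_pos hε.ne'
  have hsub : ∀ i, {ω | ε ≤ edist (f i ω + f' i ω) (g ω + g' ω)} ⊆
      {ω | ε / 2 ≤ edist (f i ω) (g ω)} ∪ {ω | ε / 2 ≤ edist (f' i ω) (g' ω)} := by
    intro i ω hω
    by_contra! h
    simp only [Set.mem_union, Set.mem_ofPred_eq, not_or, not_le] at h
    have := (edist_add_add_le _ _ _ _).trans_lt (ENNReal.add_lt_add h.1 h.2)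
    exact (ENNReal.add_halves ε ▸ this).not_ge hω
  refine tendsto_of_tendsto_of_tendsto_of_le_of_le tendsto_const_nhds
    (by simpa using (hf _ hε2).add (hf' _ hε2)) (fun i => zero_le)
    (fun i => (measure_mono (hsub i)).trans (measure_union_le _ _))

theorem TendstoInMeasure.const_mul {𝕜 : Type*} [NormedDivisionRing 𝕜] {f : ι → Ω → 𝕜}
    {g : Ω → 𝕜} (c : 𝕜) (hf : TendstoInMeasure μ f l g) :
    TendstoInMeasure μ (fun i ω => c * f i ω) l (fun ω => c * g ω) := by
  rw [tendstoInMeasure_iff_dist] at hf ⊢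
  intro ε hε
  rcases eq_or_ne c 0 with rfl | hc
  · simpa [not_le.mpr hε] using tendsto_const_nhds
  have hc' : 0 < ‖c‖ := norm_pos_iff.mpr hc
  convert hf (ε / ‖c‖) (by positivity) using 3 with i
  ext ω
  rw [Set.mem_ofPred_eq, Set.mem_ofPred_eq, dist_eq_norm, dist_eq_norm, ← mul_sub, norm_mul,
    div_le_iff₀ hc', mul_comm]

end MeasureTheory

namespace IterLimInProb

variable {Ω : Type*} [MeasurableSpace Ω] {μ : Measure Ω}

theorem const : ∀ (k : ℕ) (Z : Ω → ℝ), IterLimInProb μ k (fun _ => Z) Z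
  | 0, _ => fun _ => rfl
  | k + 1, Z => ⟨fun _ => Z, fun _ => const k Z, tendstoInMeasure_const Z⟩

theorem add : ∀ {k : ℕ} {F F' : (Fin k → ℕ) → Ω → ℝ} {Z Z' : Ω → ℝ},
    IterLimInProb μ k F Z → IterLimInProb μ k F' Z' →
    IterLimInProb μ k (fun M ω => F M ω + F' M ω) (fun ω => Z ω + Z' ω)
  | 0, _, _, _, _, h, h' => fun ω => congrArg₂ (· + ·) (h ω) (h' ω)
  | _ + 1, _, _, _, _, ⟨H, hH, hHt⟩, ⟨H', hH', hH't⟩ =>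
    ⟨fun M₁ ω => H M₁ ω + H' M₁ ω, fun M₁ => (hH M₁).add (hH' M₁), hHt.add hH't⟩

theorem const_mul (c : ℝ) : ∀ {k : ℕ} {F : (Fin k → ℕ) → Ω → ℝ} {Z : Ω → ℝ},
    IterLimInProb μ k F Z → IterLimInProb μ k (fun M ω => c * F M ω) (fun ω => c * Z ω)
  | 0, _, _, h => fun ω => congrArg (c * ·) (h ω)
  | _ + 1, _, _, ⟨H, hH, hHt⟩ =>
    ⟨fun M₁ ω => c * H M₁ ω, fun M₁ => (hH M₁).const_mul c, hHt.const_mul c⟩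

theorem finset_sum {k : ℕ} {ι : Type*} (s : Finset ι) {F : ι → (Fin k → ℕ) → Ω → ℝ}
    {Z : ι → Ω → ℝ} (h : ∀ i ∈ s, IterLimInProb μ k (F i) (Z i)) :
    IterLimInProb μ k (fun M ω => ∑ i ∈ s, F i M ω) (fun ω => ∑ i ∈ s, Z i ω) := by
  induction s using Finset.cons_induction with
  | empty =>
    simp only [Finset.sum_empty]
    exact const k fun _ => 0
  | cons a s ha ih =>
    simp only [Finset.sum_cons]
    exact (h a (Finset.mem_cons_self a s)).add (ih fun i hi => h i (Finset.mem_cons_of_mem hi))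

theorem ite_of_eventually : ∀ {k : ℕ} {p : Fin k → ℕ → Prop} [∀ l, DecidablePred (p l)]
    {F : (Fin k → ℕ) → Ω → ℝ} {Z : Ω → ℝ}, (∀ l, ∀ᶠ m in atTop, p l m) →
    IterLimInProb μ k F Z →
    IterLimInProb μ k (fun M ω => if ∀ l, p l (M l) then F M ω else 0) Z
  | 0, _, _, _, _, _, h => by simpa [IterLimInProb] using h
  | k + 1, p, _, F, Z, hp, ⟨H, hH, hHt⟩ => by
    refine ⟨fun M₁ ω => if p 0 M₁ then H M₁ ω else 0, fun M₁ => ?_, ?_⟩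
    · by_cases h0 : p 0 M₁
      · simpa [Fin.forall_fin_succ, h0] using ite_of_eventually (fun l => hp l.succ) (hH M₁)
      · simpa [Fin.forall_fin_succ, h0] using const k fun _ => (0 : ℝ)
    · refine hHt.congr' ?_ .rfl
      filter_upwards [hp 0] with M₁ h0
      simp [h0]

theorem zero_of_tendstoInMeasure : ∀ {k : ℕ} {W : (Fin k → ℕ) → Ω → ℝ} (j : Fin k),
    (∀ M M' : Fin k → ℕ, (∀ l ≤ j, M l = M' l) → W M = W M') →
    (∀ M, TendstoInMeasure μ (fun m => W (Function.update M j m)) atTop 0) →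
    IterLimInProb μ k W 0
  | 0, _, j, _, _ => j.elim0
  | k + 1, W, j, hdep, hlim => by
    rcases Fin.eq_zero_or_eq_succ j with rfl | ⟨j, rfl⟩
    · refine ⟨fun M₁ => W (Fin.cons M₁ 0), fun M₁ => ?_, ?_⟩
      · have hW : (fun M => W (Fin.cons M₁ M)) = fun _ => W (Fin.cons M₁ 0) :=
          funext fun M => hdep _ _ fun l hl => by simp [Fin.le_zero_iff.mp hl]
        exact hW ▸ const k _
      · simpa [Fin.update_cons_zero] using hlim (Fin.cons 0 0)
    · refine ⟨fun _ => 0, fun M₁ => zero_of_tendstoInMeasure j ?_ fun M => ?_,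
        tendstoInMeasure_const 0⟩
      · intro M M' hMM'
        refine hdep _ _ (Fin.cases (fun _ => rfl) fun l hl => ?_)
        simpa using hMM' l (Fin.succ_le_succ_iff.mp hl)
      · simpa [Fin.cons_update] using hlim (Fin.cons M₁ M)

end IterLimInProb

theorem Finset.sum_comp_sub_eq_sum_ite {G M : Type*} [AddCommGroup G] [DecidableEq G]
    [AddCommMonoid M] {s B : Finset G} {d : G} (hs : ∀ j ∈ s, j - d ∈ B) (f : G → M) :
    ∑ j ∈ s, f (j - d) = ∑ x ∈ B, if x + d ∈ s then f x else 0 := by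
  rw [← Finset.sum_filter]
  exact Finset.sum_nbij' (· - d) (· + d)
    (fun j hj => Finset.mem_filter.mpr ⟨hs j hj, by rwa [sub_add_cancel]⟩)
    (fun x hx => (Finset.mem_filter.mp hx).2) (fun j _ => sub_add_cancel j d)
    (fun x _ => add_sub_cancel_right x d) (fun _ _ => rfl)

theorem sum_neg_one_pow_mul_prod {R : Type*} [CommRing R] {N : ℕ} (φ : Fin N → Bool → R) :
    ∑ i : Fin N → Bool, (-1 : R) ^ (∑ l, if i l then 1 else 0 : ℕ) * ∏ l, φ l (i l) =
      ∏ l, (φ l false - φ l true) := by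
  simp_rw [← Finset.prod_pow_eq_pow_sum, ← Finset.prod_mul_distrib]
  rw [← Fintype.prod_sum (fun l b => (-1 : R) ^ (if b then 1 else 0) * φ l b)]
  simp [sub_eq_add_neg, add_comm]

section Telescoping

/-! Both sides of the telescoping identity `sum_Icc_sqInc` are expanded in the point masses of
the box `[a - 1, t]`; by `sum_neg_one_pow_mul_prod` the coefficients factor over coordinates. -/

variable {N : ℕ}

def boxCorner (a t : Fin N → ℤ) (i : Fin N → Bool) : Fin N → ℤ :=
  fun l => if i l then a l - 1 else t l

theorem sum_Icc_sqInc_eq_sum_Icc (f : (Fin N → ℤ) → ℝ) (a t : Fin N → ℤ) :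
    ∑ j ∈ Finset.Icc a t, sqInc f j = ∑ x ∈ Finset.Icc (a - 1) t,
      (∏ l, ((if x l ∈ Finset.Icc (a l) (t l) then 1 else 0) -
        (if x l + 1 ∈ Finset.Icc (a l) (t l) then 1 else 0))) * f x := by
  classical
  have hshift : ∀ i : Fin N → Bool,
      ∑ j ∈ Finset.Icc a t, f (fun l => j l - if i l then 1 else 0) =
        ∑ x ∈ Finset.Icc (a - 1) t,
          (∏ l, if x l + (if i l then 1 else 0) ∈ Finset.Icc (a l) (t l) then (1 : ℝ) else 0) *
            f x := by
    intro i
    refine (Finset.sum_comp_sub_eq_sum_ite (d := fun l => if i l then 1 else 0)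
      (fun j hj => ?_) f).trans (Finset.sum_congr rfl fun x _ => ?_)
    · simp only [Finset.mem_Icc, Pi.le_def] at hj ⊢
      refine ⟨fun l => ?_, fun l => ?_⟩ <;>
      · have := hj.1 l; have := hj.2 l
        simp only [Pi.sub_apply, Pi.one_apply]
        split_ifs <;> omega
    · simp [Fintype.prod_boole, Finset.mem_Icc, Pi.le_def, forall_and]
  unfold sqInc
  rw [Finset.sum_comm]
  simp_rw [← Finset.mul_sum, hshift, Finset.mul_sum, ← mul_assoc]
  rw [Finset.sum_comm]
  refine Finset.sum_congr rfl fun x _ => ?_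
  rw [← Finset.sum_mul, sum_neg_one_pow_mul_prod
    (fun l b => if x l + (if b then 1 else 0) ∈ Finset.Icc (a l) (t l) then (1 : ℝ) else 0)]
  simp

theorem sum_boxCorner_eq_sum_Icc (f : (Fin N → ℤ) → ℝ) {a t : Fin N → ℤ} (hat : a ≤ t) :
    ∑ i : Fin N → Bool, (-1 : ℝ) ^ (∑ l, if i l then 1 else 0 : ℕ) * f (boxCorner a t i) =
      ∑ x ∈ Finset.Icc (a - 1) t,
        (∏ l, ((if t l = x l then 1 else 0) - (if a l - 1 = x l then 1 else 0))) * f x := by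
  classical
  have hpoint : ∀ i, f (boxCorner a t i) = ∑ x ∈ Finset.Icc (a - 1) t,
      (∏ l, if (if i l then a l - 1 else t l) = x l then (1 : ℝ) else 0) * f x := by
    intro i
    have hi : boxCorner a t i ∈ Finset.Icc (a - 1) t := by
      simp only [Finset.mem_Icc, Pi.le_def, boxCorner, Pi.sub_apply, Pi.one_apply]
      exact ⟨fun l => by have : a l ≤ t l := hat l; split_ifs <;> omega,
        fun l => by have : a l ≤ t l := hat l; split_ifs <;> omega⟩
    calc f (boxCorner a t i)
        = ∑ x ∈ Finset.Icc (a - 1) t, if boxCorner a t i = x then f x else 0 := by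
          rw [Finset.sum_ite_eq, if_pos hi]
      _ = _ := Finset.sum_congr rfl fun x _ => by simp [Fintype.prod_boole, funext_iff, boxCorner]
  simp_rw [hpoint, Finset.mul_sum, ← mul_assoc]
  rw [Finset.sum_comm]
  refine Finset.sum_congr rfl fun x _ => ?_
  rw [← Finset.sum_mul, sum_neg_one_pow_mul_prod
    (fun l b => if (if b then a l - 1 else t l) = x l then (1 : ℝ) else 0)]
  simp

theorem sum_Icc_sqInc (f : (Fin N → ℤ) → ℝ) {a t : Fin N → ℤ} (hat : a ≤ t) :
    ∑ j ∈ Finset.Icc a t, sqInc f j =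
      ∑ i : Fin N → Bool, (-1 : ℝ) ^ (∑ l, if i l then 1 else 0 : ℕ) * f (boxCorner a t i) := by
  rw [sum_Icc_sqInc_eq_sum_Icc, sum_boxCorner_eq_sum_Icc f hat]
  refine Finset.sum_congr rfl fun x hx => congrArg (· * f x) (Finset.prod_congr rfl fun l _ => ?_)
  simp only [Finset.mem_Icc, Pi.le_def] at hx
  have := hat l; have := hx.1 l; have := hx.2 l
  simp only [Finset.mem_Icc, Pi.sub_apply, Pi.one_apply] at *
  split_ifs <;> first | omega | norm_num

end Telescoping

theorem exp_mul_sub_prevInner {N : ℕ} (Θ : Fin N → ℝ) (X : (Fin N → ℤ) → ℝ) (j : Fin N → ℤ) :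
    Real.exp (∑ l, (j l : ℝ) * Θ l) * (X j - prevInner Θ X j) =
      sqInc (fun u => Real.exp (∑ l, (u l : ℝ) * Θ l) * X u) j := by
  classical
  set g : (Fin N → Bool) → ℝ := fun i => (-1 : ℝ) ^ (∑ l, if i l then 1 else 0 : ℕ) *
    (Real.exp (-∑ l, (if i l then (1 : ℝ) else 0) * Θ l) * X (fun l => j l - if i l then 1 else 0))
  have hX : X j - prevInner Θ X j = ∑ i, g i := by
    rw [prevInner, Finset.filter_ne', ← Finset.add_sum_erase _ g (Finset.mem_univ fun _ => false),
      sub_eq_add_neg, ← Finset.sum_neg_distrib]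
    congr 1
    · simp [g]
    · refine Finset.sum_congr rfl fun i _ => ?_
      rw [pow_add]
      ring
  rw [hX, Finset.mul_sum, sqInc]
  refine Finset.sum_congr rfl fun i _ => ?_
  have hexp : Real.exp (∑ l, ((j l - if i l then 1 else 0 : ℤ) : ℝ) * Θ l) =
      Real.exp (∑ l, (j l : ℝ) * Θ l) * Real.exp (-∑ l, (if i l then (1 : ℝ) else 0) * Θ l) := by
    rw [← Real.exp_add, ← sub_eq_add_neg, ← Finset.sum_sub_distrib]
    congr 1
    refine Finset.sum_congr rfl fun l _ => ?_
    split_ifs <;> push_cast <;> ring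
  simp only [g, hexp]
  ring

theorem sum_Icc_exp_mul_sqInc {N : ℕ} {Θ : Fin N → ℝ} {X G : (Fin N → ℤ) → ℝ}
    (hrep : ∀ t, X t = prevInner Θ X t + sqInc G t) {a t : Fin N → ℤ} (hat : a ≤ t) :
    ∑ j ∈ Finset.Icc a t, Real.exp (∑ l, (j l : ℝ) * Θ l) * sqInc G j =
      ∑ i : Fin N → Bool, (-1 : ℝ) ^ (∑ l, if i l then 1 else 0 : ℕ) *
        (Real.exp (∑ l, (boxCorner a t i l : ℝ) * Θ l) * X (boxCorner a t i)) := by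
  have hG : ∀ j, sqInc G j = X j - prevInner Θ X j := fun j => eq_sub_of_add_eq' (hrep j).symm
  simp_rw [hG, exp_mul_sub_prevInner]
  exact sum_Icc_sqInc _ hat

section Corners

variable {Ω : Type*} [MeasurableSpace Ω] {μ : Measure Ω} {N : ℕ}

theorem tendstoInMeasure_exp_mul_update {Θ : Fin N → ℝ} {X : (Fin N → ℤ) → Ω → ℝ} {j : Fin N}
    {u : Fin N → ℤ} {l : Filter ℤ}
    (h : TendstoInMeasure μ
      (fun m : ℤ => fun ω => Real.exp ((m : ℝ) * Θ j) * X (Function.update u j m) ω) l 0) :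
    TendstoInMeasure μ (fun m : ℤ => fun ω =>
      Real.exp (∑ k, (Function.update u j m k : ℝ) * Θ k) * X (Function.update u j m) ω) l 0 := by
  have hsum : ∀ m : ℤ, ∑ k, (Function.update u j m k : ℝ) * Θ k =
      m * Θ j + ∑ k ∈ Finset.univ \ {j}, (u k : ℝ) * Θ k := fun m => by
    rw [Finset.sum_congr rfl fun k _ =>
        Function.apply_update (fun k (n : ℤ) => (n : ℝ) * Θ k) u j m k,
      Finset.sum_update_of_mem (Finset.mem_univ j)]
  refine (h.const_mul (Real.exp (∑ k ∈ Finset.univ \ {j}, (u k : ℝ) * Θ k))).congr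
    (fun m => ae_of_all _ fun ω => ?_) (ae_of_all _ fun ω => ?_)
  · simp only [hsum, Real.exp_add]
    ring
  · simp

theorem iterLimInProb_boxCorner {Y : (Fin N → ℤ) → Ω → ℝ}
    (hY : ∀ j u, TendstoInMeasure μ (fun m : ℤ => Y (Function.update u j m)) atBot 0)
    (t : Fin N → ℤ) (i : Fin N → Bool) :
    IterLimInProb μ N (fun M => Y (boxCorner (fun l => -(M l : ℤ)) t i))
      (if i = fun _ => false then Y t else 0) := by
  split_ifs with hi
  · subst hi
    exact IterLimInProb.const N (Y t)
  obtain ⟨j, hj, hmax⟩ := Finset.exists_max_image (Finset.univ.filter fun l => i l) id <| by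
    obtain ⟨l, hl⟩ : ∃ l, i l := by
      by_contra! h
      exact hi (funext fun l => by simpa using h l)
    exact ⟨l, by simpa using hl⟩
  simp only [Finset.mem_filter, Finset.mem_univ, true_and, id] at hj hmax
  refine IterLimInProb.zero_of_tendstoInMeasure j (fun M M' hMM' => ?_) fun M => ?_
  · refine congrArg Y (funext fun l => ?_)
    simp only [boxCorner]
    split_ifs with hl
    · rw [hMM' l (hmax l hl)]
    · rfl
  · have hupd : ∀ m : ℕ, boxCorner (fun l => -(Function.update M j m l : ℤ)) t i =
        Function.update (boxCorner (fun l => -(M l : ℤ)) t i) j (-(m : ℤ) - 1) := by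
      intro m
      funext l
      rcases eq_or_ne l j with rfl | hl
      · simp [boxCorner, hj]
      · simp [boxCorner, hl]
    simp_rw [hupd]
    exact (hY j _).comp (tendsto_atTop_atBot.2 fun b => ⟨(-b).toNat, fun m hm => by omega⟩)

end Corners

theorem moving_average_representation_general {Ω : Type*} [MeasurableSpace Ω]
    (μ : Measure Ω) {N : ℕ} (Θ : Fin N → ℝ) (X : (Fin N → ℤ) → Ω → ℝ)
    (G : (Fin N → ℤ) → Ω → ℝ)
    (hrep : ∀ t ω, X t ω = prevInner Θ (fun u => X u ω) t + sqInc (fun u => G u ω) t)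
    (hlim : ∀ (j : Fin N) (t : Fin N → ℤ),
      TendstoInMeasure μ
        (fun m : ℤ => fun ω => Real.exp ((m : ℝ) * Θ j) * X (Function.update t j m) ω)
        atBot (fun _ => 0)) :
    ∀ t : Fin N → ℤ,
      IterLimInProb μ N
        (fun M ω =>
          ∑ j ∈ Finset.Icc (fun l => -(M l : ℤ)) t,
            Real.exp (∑ l, (j l : ℝ) * Θ l) * sqInc (fun u => G u ω) j)
        (fun ω => Real.exp (∑ l, (t l : ℝ) * Θ l) * X t ω) := by
  intro t
  set Y : (Fin N → ℤ) → Ω → ℝ := fun u ω => Real.exp (∑ l, (u l : ℝ) * Θ l) * X u ω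
  have hpartial : ∀ (M : Fin N → ℕ) ω, ∑ j ∈ Finset.Icc (fun l => -(M l : ℤ)) t,
      Real.exp (∑ l, (j l : ℝ) * Θ l) * sqInc (fun u => G u ω) j =
        if ∀ l, -(M l : ℤ) ≤ t l then ∑ i : Fin N → Bool,
          (-1 : ℝ) ^ (∑ l, if i l then 1 else 0 : ℕ) * Y (boxCorner (fun l => -(M l : ℤ)) t i) ω
        else 0 := by
    intro M ω
    split_ifs with hM
    · exact sum_Icc_exp_mul_sqInc (fun u => hrep u ω) hM
    · rw [Finset.Icc_eq_empty fun h => hM h, Finset.sum_empty]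
  have hY : ∀ j u, TendstoInMeasure μ (fun m : ℤ => Y (Function.update u j m)) atBot 0 :=
    fun j u => tendstoInMeasure_exp_mul_update (hlim j u)
  have hbox : ∀ l, ∀ᶠ m : ℕ in atTop, -(m : ℤ) ≤ t l := fun l =>
    (eventually_ge_atTop (-t l).toNat).mono fun m hm => by omega
  have hcorners := IterLimInProb.finset_sum Finset.univ fun i _ =>
    (iterLimInProb_boxCorner hY t i).const_mul ((-1 : ℝ) ^ (∑ l, if i l then 1 else 0 : ℕ))
  simp_rw [hpartial]
  convert hcorners.ite_of_eventually hbox using 1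
  funext ω
  rw [Fintype.sum_eq_single (fun _ => false) fun i hi => by simp [hi]]
  simp [Y]

/-- moving-average representation: under the hypotheses of
Theorem gchar1, for every `t ∈ ℤ^N` the iterated limit in probability
`lim_{M₁→∞}⋯lim_{M_N→∞} Σ_{j₁=−M₁}^{t₁}⋯Σ_{j_N=−M_N}^{t_N} e^{⟨j,Θ⟩} Δ_j G`
equals `e^{⟨t,Θ⟩} X_t`, i.e. `X_t = e^{−Σ_l t_l θ_l} ·` that iterated limit. -/
theorem moving_average_representation {Ω : Type*} [MeasurableSpace Ω]
    (μ : Measure Ω) [IsProbabilityMeasure μ] {N : ℕ} (hN : 1 ≤ N)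
    (Θ : Fin N → ℝ) (hΘ : ∀ l, 0 < Θ l)
    (X : (Fin N → ℤ) → Ω → ℝ) (hmeas : ∀ t, Measurable (X t))
    (G : (Fin N → ℤ) → Ω → ℝ) (hG : MemClassG μ Θ G)
    (hrep : ∀ t ω, X t ω = prevInner Θ (fun u => X u ω) t + sqInc (fun u => G u ω) t)
    (hlim : ∀ (j : Fin N) (t : Fin N → ℤ),
      TendstoInMeasure μ
        (fun m : ℤ => fun ω => Real.exp ((m : ℝ) * Θ j) * X (Function.update t j m) ω)
        atBot (fun _ => 0)) :
    ∀ t : Fin N → ℤ,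
      IterLimInProb μ N
        (fun M ω =>
          ∑ j ∈ Finset.Icc (fun l => -(M l : ℤ)) t,
            Real.exp (∑ l, (j l : ℝ) * Θ l) * sqInc (fun u => G u ω) j)
        (fun ω => Real.exp (∑ l, (t l : ℝ) * Θ l) * X t ω) :=
  moving_average_representation_general μ Θ X G hrep hlim
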